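/- For F(x,y,z) = x⁴ + y⁴ + z⁴ + a x² y² + b(x² + y²)z², the Hessian determinant of F at a point (x, y, 0) with x⁴ + y⁴ + a x² y² = 0 equals 2b(x²+y²)(−16a²x²y² + (2a x² + 12 y²)(12 x² + 2a y²)) up to the stated formula; in particular, if b ≠ 0 and (a-2)(a+2) ≠ 0, then no point of the form [x : 1 : 0] on the curve is a flex point, i.e., the system x⁴ + a x² + 1 = 0 and H_F(x,1,0) = 0 has no common solution. -/

import Mathlib

/-!
On the line `z = 0` every mixed second derivative `∂ᵢ∂₂F` vanishes, so the Hessian determinant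
factors as `∂₂²F` times the `2 × 2` Hessian minor in `x, y`. At `y = 1`, reducing modulo the
curve equation `x⁴ + a x² + 1 = 0` leaves `-72 b (a² - 4) x² (x² + 1)`; and neither `x = 0` nor
`x² = -1` lies on the curve unless `a = 2`.
-/

open MvPolynomial

/-- The Kuribayashi quartic with two parameters:
`F = x⁴ + y⁴ + z⁴ + a x² y² + b (x² + y²) z²`. -/
noncomputable def Fab (a b : ℂ) : MvPolynomial (Fin 3) ℂ :=
  X 0 ^ 4 + X 1 ^ 4 + X 2 ^ 4 + C a * X 0 ^ 2 * X 1 ^ 2 +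
    C b * (X 0 ^ 2 + X 1 ^ 2) * X 2 ^ 2

noncomputable def Hab (a b : ℂ) : MvPolynomial (Fin 3) ℂ :=
  Matrix.det (Matrix.of fun i j : Fin 3 => pderiv i (pderiv j (Fab a b)))

@[simp]
theorem Derivation.map_ofNat {R A M : Type*} [CommSemiring R] [CommSemiring A] [AddCommMonoid M]
    [Algebra R A] [Module A M] [Module R M] (D : Derivation R A M) (n : ℕ) [n.AtLeastTwo] :
    D (ofNat(n) : A) = 0 := by
  rw [← Nat.cast_ofNat, D.map_natCast]

def hessianFabAt (a b : ℂ) (v : Fin 3 → ℂ) : Matrix (Fin 3) (Fin 3) ℂ :=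
  !![12 * v 0 ^ 2 + 2 * a * v 1 ^ 2 + 2 * b * v 2 ^ 2, 4 * a * v 0 * v 1, 4 * b * v 0 * v 2;
    4 * a * v 0 * v 1, 12 * v 1 ^ 2 + 2 * a * v 0 ^ 2 + 2 * b * v 2 ^ 2, 4 * b * v 1 * v 2;
    4 * b * v 0 * v 2, 4 * b * v 1 * v 2, 12 * v 2 ^ 2 + 2 * b * (v 0 ^ 2 + v 1 ^ 2)]

theorem eval_pderiv_pderiv_Fab (a b : ℂ) (v : Fin 3 → ℂ) :
    (Matrix.of fun i j : Fin 3 => eval v (pderiv i (pderiv j (Fab a b)))) = hessianFabAt a b v := by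
  ext i j
  fin_cases i <;> fin_cases j <;> simp [Fab, hessianFabAt, pderiv_X, Pi.single_apply] <;> ring

theorem eval_Hab (a b : ℂ) (v : Fin 3 → ℂ) : eval v (Hab a b) = (hessianFabAt a b v).det := by
  rw [← eval_pderiv_pderiv_Fab, Hab, RingHom.map_det]
  rfl

theorem eval_Hab_of_z_eq_zero (a b x y : ℂ) :
    eval ![x, y, 0] (Hab a b) =
      2 * b * (x ^ 2 + y ^ 2) *
        (-16 * a ^ 2 * x ^ 2 * y ^ 2 +
          (2 * a * x ^ 2 + 12 * y ^ 2) * (12 * x ^ 2 + 2 * a * y ^ 2)) := by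
  rw [eval_Hab, Matrix.det_fin_three]
  simp only [hessianFabAt, Matrix.of_apply, Matrix.cons_val_zero, Matrix.cons_val_one,
    Matrix.cons_val_two, Matrix.head_cons, Matrix.tail_cons]
  ring

theorem eval_Hab_of_y_eq_one_of_z_eq_zero {a b x : ℂ} (hx : x ^ 4 + a * x ^ 2 + 1 = 0) :
    eval ![x, 1, 0] (Hab a b) = -72 * b * ((a - 2) * (a + 2)) * (x ^ 2 * (x ^ 2 + 1)) := by
  rw [eval_Hab_of_z_eq_zero]
  linear_combination 48 * a * b * (x ^ 2 + 1) * hx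

theorem hessian_at_z_zero_and_no_flex_at_infinity (a b : ℂ) (hb : b ≠ 0)
    (ha : (a - 2) * (a + 2) ≠ 0) :
    (∀ x y : ℂ, x ^ 4 + y ^ 4 + a * x ^ 2 * y ^ 2 = 0 →
      eval ![x, y, 0] (Hab a b) =
        2 * b * (x ^ 2 + y ^ 2) *
          (-16 * a ^ 2 * x ^ 2 * y ^ 2 +
            (2 * a * x ^ 2 + 12 * y ^ 2) * (12 * x ^ 2 + 2 * a * y ^ 2))) ∧
    ¬ ∃ x : ℂ, x ^ 4 + a * x ^ 2 + 1 = 0 ∧ eval ![x, 1, 0] (Hab a b) = 0 := by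
  refine ⟨fun x y _ => eval_Hab_of_z_eq_zero a b x y, ?_⟩
  rintro ⟨x, hcurve, hflex⟩
  rw [eval_Hab_of_y_eq_one_of_z_eq_zero hcurve] at hflex
  have hx : x ≠ 0 := by
    rintro rfl
    norm_num at hcurve
  have hx1 : x ^ 2 + 1 ≠ 0 := fun h => ha <| by
    rw [show a - 2 = 0 by linear_combination (x ^ 2 - 1 + a) * h - hcurve, zero_mul]
  simp [hb, ha, hx, hx1] at hflex
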